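/- For any acyclic ECTA node n and path p, the denotation of the subautomaton at path p overapproximates the set of subterms at p: ⟦n|p⟧ ⊇ { t|p : t ∈ ⟦n⟧, t|p defined }. -/

import Mathlib

universe u
variable {S : Type u}

/-- Terms over a signature: a symbol applied to a list of child terms. -/
inductive Term (S : Type u) where
  | mk : S → List (Term S) → Term S

/-- The i-th child of a term, if it exists. -/
def Term.child : Term S → ℕ → Option (Term S)
  | .mk _ ts, i => ts[i]?

/-- Subterm of `t` at path `p` (partial). -/
def subAt : List ℕ → Term S → Option (Term S)
  | [], t => some t
  | i :: p, t => (t.child i).bind (subAt p)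

/-- A term satisfies a path equivalence class `c` if the subterms at
all paths of `c` exist and are equal. -/
def pecSat (c : Set (List ℕ)) (t : Term S) : Prop :=
  ∃ t', ∀ p ∈ c, subAt p t = some t'

/-- A term satisfies a path constraint set if it satisfies each member PEC. -/
def pcsSat (C : Set (Set (List ℕ))) (t : Term S) : Prop :=
  ∀ c ∈ C, pecSat c t

/-- A PCS is closed if whenever `p', p'' ∈ c₁ ∈ C` and `p'.p ∈ c₂ ∈ C`,
then also `p''.p ∈ c₂`. -/
def Closed (C : Set (Set (List ℕ))) : Prop :=
  ∀ c₁ ∈ C, ∀ c₂ ∈ C, ∀ p' p'' p : List ℕ,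
    p' ∈ c₁ → p'' ∈ c₁ → p' ++ p ∈ c₂ → p'' ++ p ∈ c₂

/-- A set of paths is prefix-free if no member is a proper prefix of another. -/
def PrefixFree (c : Set (List ℕ)) : Prop :=
  ∀ p ∈ c, ∀ q ∈ c, p <+: q → p = q

/-- Well-formed terms with respect to an arity function. -/
inductive WFT (ar : S → ℕ) : Term S → Prop where
  | mk {s : S} {ts : List (Term S)} :
      ts.length = ar s → (∀ t ∈ ts, WFT ar t) → WFT ar (Term.mk s ts)

mutual
/-- An acyclic ECTA node (state): a finite list of transitions. -/
inductive Node (S : Type u) where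
  | mk : List (Edge S) → Node S
/-- An ECTA transition: a symbol, child nodes, and a path constraint set,
or the empty transition `⊥`. -/
inductive Edge (S : Type u) where
  | mk : S → List (Node S) → Set (Set (List ℕ)) → Edge S
  | bot : Edge S
end

mutual
/-- Acceptance of a term by a node. -/
inductive AccN : Node S → Term S → Prop where
  | intro {es : List (Edge S)} {e : Edge S} {t : Term S} :
      e ∈ es → AccE e t → AccN (Node.mk es) t
/-- Acceptance of a term by a transition: the symbols match, each child term
is accepted by the corresponding child node, and the term satisfies the
constraint set. -/
inductive AccE : Edge S → Term S → Prop where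
  | intro {s : S} {ns : List (Node S)} {C : Set (Set (List ℕ))} {ts : List (Term S)} :
      ts.length = ns.length →
      (∀ i (h1 : i < ns.length) (h2 : i < ts.length), AccN (ns[i]'h1) (ts[i]'h2)) →
      pcsSat C (Term.mk s ts) →
      AccE (Edge.mk s ns C) (Term.mk s ts)
end

/-- Denotation of a node. -/
def denN (n : Node S) : Set (Term S) := {t | AccN n t}
/-- Denotation of a transition. -/
def denE (e : Edge S) : Set (Term S) := {t | AccE e t}

/-- Union of two nodes: merge their transitions. -/
def Node.union : Node S → Node S → Node S
  | .mk es₁, .mk es₂ => .mk (es₁ ++ es₂)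

/-- The empty node `⊥`. -/
def botN : Node S := Node.mk []

/-- Consistency of a PCS: some term satisfies it. -/
def Consistent (S : Type u) (C : Set (Set (List ℕ))) : Prop :=
  ∃ t : Term S, pcsSat C t

open Classical in
mutual
/-- Intersection of two nodes: pairwise intersection of their transitions. -/
noncomputable def interN : Node S → Node S → Node S
  | .mk es₁, .mk es₂ => .mk (interEdges es₁ es₂)
  termination_by n₁ n₂ => sizeOf n₁ + sizeOf n₂
noncomputable def interEdges : List (Edge S) → List (Edge S) → List (Edge S)
  | [], _ => []
  | e :: es, es₂ => interEdgeList e es₂ ++ interEdges es es₂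
  termination_by es₁ es₂ => sizeOf es₁ + sizeOf es₂
noncomputable def interEdgeList : Edge S → List (Edge S) → List (Edge S)
  | _, [] => []
  | e₁, e₂ :: es => interE e₁ e₂ :: interEdgeList e₁ es
  termination_by e es => sizeOf e + sizeOf es
/-- Intersection of two transitions: same symbol, pointwise child
intersection, union of constraint sets when consistent; `⊥` otherwise. -/
noncomputable def interE : Edge S → Edge S → Edge S
  | .bot, _ => .bot
  | .mk _ _ _, .bot => .bot
  | .mk s₁ ns₁ C₁, .mk s₂ ns₂ C₂ =>
    if s₁ = s₂ ∧ ns₁.length = ns₂.length ∧ Consistent S (C₁ ∪ C₂)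
    then .mk s₁ (interNodes ns₁ ns₂) (C₁ ∪ C₂)
    else .bot
  termination_by e₁ e₂ => sizeOf e₁ + sizeOf e₂
noncomputable def interNodes : List (Node S) → List (Node S) → List (Node S)
  | [], _ => []
  | _ :: _, [] => []
  | n₁ :: ns₁, n₂ :: ns₂ => interN n₁ n₂ :: interNodes ns₁ ns₂
  termination_by ns₁ ns₂ => sizeOf ns₁ + sizeOf ns₂
  decreasing_by all_goals (simp; omega)
end

mutual
/-- Nodes reachable from a node via a path. -/
def nodesN : Node S → List ℕ → List (Node S)
  | n, [] => [n]
  | .mk es, j :: p => nodesL es (j :: p)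
def nodesL : List (Edge S) → List ℕ → List (Node S)
  | [], _ => []
  | e :: es, p => nodesE e p ++ nodesL es p
/-- Nodes reachable from a transition via a (nonempty) path. -/
def nodesE : Edge S → List ℕ → List (Node S)
  | _, [] => []
  | .bot, _ => []
  | .mk _ ns _, j :: p => nodesNs ns j p
def nodesNs : List (Node S) → ℕ → List ℕ → List (Node S)
  | [], _, _ => []
  | n :: _, 0, p => nodesN n p
  | _ :: ns, j + 1, p => nodesNs ns j p
end

lemma nodesNs_get (ns : List (Node S)) (j : ℕ) (h : j < ns.length) (p : List ℕ) :
    nodesNs ns j p = nodesN (ns[j]'h) p := by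
  induction ns generalizing j with
  | nil => simp at h
  | cons n ns ih =>
    cases j with
    | zero => rfl
    | succ j => exact ih j (by simpa using h)

lemma nodesE_sub (es : List (Edge S)) (e : Edge S) (he : e ∈ es) (q : List ℕ)
    (m : Node S) (hm : m ∈ nodesE e q) : m ∈ nodesL es q := by
  induction es with
  | nil => simp at he
  | cons e' es ih =>
    rcases List.mem_cons.mp he with h | h
    · subst h; exact List.mem_append_left _ hm
    · exact List.mem_append_right _ (ih h)

lemma main_aux (k : ℕ) : ∀ (t : Term S), sizeOf t ≤ k → ∀ (n : Node S) (p : List ℕ),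
    AccN n t → ∀ t', subAt p t = some t' → ∃ m ∈ nodesN n p, AccN m t' := by
  induction k with
  | zero =>
    intro t hk
    exfalso
    cases t with
    | mk s ts => simp [Term.mk.sizeOf_spec] at hk
  | succ k ih =>
    intro t hk n p hacc t' hsub
    cases p with
    | nil =>
      simp [subAt] at hsub
      subst hsub
      exact ⟨n, by simp [nodesN], hacc⟩
    | cons j p =>
      cases hacc with
      | @intro es e t he hae =>
        cases hae with
        | @intro s ns C ts hlen hch hC =>
          simp only [subAt, Term.child] at hsub
          rcases hj : ts[j]? with _ | tj
          · rw [hj] at hsub; simp at hsub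
          · rw [hj] at hsub
            simp only [Option.bind_some, Option.bind_some] at hsub
            have hjlt : j < ts.length := by
              by_contra h
              rw [List.getElem?_eq_none (by omega)] at hj; simp at hj
            have htj : ts[j] = tj := by
              have h2 := List.getElem?_eq_getElem hjlt
              rw [hj] at h2
              exact (Option.some_inj.mp h2).symm
            have hjlt' : j < ns.length := hlen ▸ hjlt
            have haccj : AccN (ns[j]'hjlt') tj := htj ▸ hch j hjlt' hjlt
            have hsz : sizeOf tj ≤ k := by
              have h3 : sizeOf tj < sizeOf ts := List.sizeOf_lt_of_mem (htj ▸ List.getElem_mem hjlt)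
              simp [Term.mk.sizeOf_spec] at hk
              omega
            obtain ⟨m, hm, hma⟩ := ih tj hsz (ns[j]'hjlt') p haccj t' hsub
            refine ⟨m, ?_, hma⟩
            show m ∈ nodesL es (j :: p)
            apply nodesE_sub es _ he
            show m ∈ nodesNs ns j p
            rw [nodesNs_get ns j hjlt']
            exact hm

lemma main_lemma (t : Term S) (n : Node S) (p : List ℕ) (hacc : AccN n t) :
      ∀ t', subAt p t = some t' → ∃ m ∈ nodesN n p, AccN m t' :=
    main_aux (sizeOf t) t le_rfl n p hacc

  /-- Correctness of subautomaton at a path: the denotation of the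
  subautomaton `n|p` (the union of all nodes reachable from `n` via `p`)
  overapproximates the set of subterms at `p` of terms accepted by `n`. -/
  theorem subautomaton_overapprox (n : Node S) (p : List ℕ) :
      ∀ t ∈ denN n, ∀ t' : Term S, subAt p t = some t' →
      ∃ m ∈ nodesN n p, t' ∈ denN m := by
    intro t ht t' hsub
    exact main_lemma t n p ht t' hsub
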